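/- arXiv:1502.06210 — 7 statements merged into one kernel-verified Lean document; each statement's English description precedes it below -/
import Mathlib

section
/- Let δ ∈ {−1,1}, α ≠ 0, β ≠ 0 with Ω := βδ + α ≠ 0, let F(x,μ) := (−β + h(x,μ))·(x−μ)·(δ + e₁(x,μ)) − (1 + g(x,μ))·x·(α + e₂(x,μ)) with e₁, e₂, g, h C¹ and vanishing at (0,0), and let x_ps : (−ε,ε) → ℝ be the C¹ family of zeros of F with x_ps(0) = 0 and x_ps'(0) = βδ/Ω. Then β·x_ps(μ)·(x_ps(μ) − μ)/μ² tends to −αβ²δ/Ω² as μ → 0 with μ ≠ 0. Consequently there is ε' > 0 such that for all 0 < |μ| < ε': if αδ < 0 then β·x_ps(μ)·(x_ps(μ) − μ) > 0, i.e. the point (x_ps(μ), 0) lies in the sliding region; and if αδ > 0 then β·x_ps(μ)·(x_ps(μ) − μ) < 0, i.e. the point lies in the crossing region. -/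
/-!
Since `x_ps(0) = 0`, the slope `x_ps(μ)/μ` tends to `L := x_ps'(0) = βδ/Ω`, so
`β·x_ps(μ)·(x_ps(μ) − μ)/μ² = β·(x_ps(μ)/μ)·(x_ps(μ)/μ − 1) → βL(L − 1) = −αδ·(β/Ω)²`.
For `β, Ω ≠ 0` this limit has the sign of `−αδ`, and dividing by `μ² > 0` does not change
signs, so `β·x_ps(μ)·(x_ps(μ) − μ)` has that sign for all small `μ ≠ 0`.
-/

open Filter Topology

lemma tendsto_div_self_of_hasDerivAt_zero {f : ℝ → ℝ} {L : ℝ} (hf : HasDerivAt f L 0)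
    (hf0 : f 0 = 0) : Tendsto (fun μ => f μ / μ) (𝓝[≠] 0) (𝓝 L) := by
  simpa [hf0, div_eq_inv_mul] using hf.tendsto_slope_zero

lemma tendsto_mul_sub_div_sq {x : ℝ → ℝ} {L : ℝ} (β : ℝ)
    (hx : Tendsto (fun μ => x μ / μ) (𝓝[≠] 0) (𝓝 L)) :
    Tendsto (fun μ => β * x μ * (x μ - μ) / μ ^ 2) (𝓝[≠] 0) (𝓝 (β * L * (L - 1))) := by
  refine ((hx.const_mul β).mul (hx.sub tendsto_const_nhds)).congr' ?_
  filter_upwards [self_mem_nhdsWithin] with μ (hμ : μ ≠ 0)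
  field_simp

lemma exists_sign_of_tendsto_div_sq {q : ℝ → ℝ} {ℓ : ℝ}
    (hq : Tendsto (fun μ => q μ / μ ^ 2) (𝓝[≠] 0) (𝓝 ℓ)) :
    ∃ ε > 0, ∀ μ : ℝ, 0 < |μ| → |μ| < ε → (0 < ℓ → 0 < q μ) ∧ (ℓ < 0 → q μ < 0) := by
  have hpos : ∀ᶠ μ in 𝓝[≠] 0, 0 < ℓ → 0 < q μ / μ ^ 2 := by
    by_cases hℓ : 0 < ℓ
    · filter_upwards [hq.eventually (eventually_gt_nhds hℓ)] with μ hμ using fun _ => hμ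
    · exact Eventually.of_forall fun _ h => absurd h hℓ
  have hneg : ∀ᶠ μ in 𝓝[≠] 0, ℓ < 0 → q μ / μ ^ 2 < 0 := by
    by_cases hℓ : ℓ < 0
    · filter_upwards [hq.eventually (eventually_lt_nhds hℓ)] with μ hμ using fun _ => hμ
    · exact Eventually.of_forall fun _ h => absurd h hℓ
  obtain ⟨ε, hε, hsign⟩ := Metric.eventually_nhds_iff.mp
    (eventually_nhdsWithin_iff.mp (hpos.and hneg))
  refine ⟨ε, hε, fun μ hμ0 hμε => ?_⟩
  have hμ : μ ≠ 0 := abs_pos.mp hμ0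
  have hμ2 : 0 < μ ^ 2 := by positivity
  obtain ⟨hp, hn⟩ := hsign (by rwa [Real.dist_eq, sub_zero]) hμ
  exact ⟨fun hℓ => (div_pos_iff_of_pos_right hμ2).mp (hp hℓ),
    fun hℓ => by simpa using (div_lt_iff₀ hμ2).mp (hn hℓ)⟩

theorem pseudo_equilibrium_sliding_crossing_dichotomy_general
    (δ α β : ℝ) (hβ : β ≠ 0)
    (hΩ : β * δ + α ≠ 0)
    (ε : ℝ) (hε : 0 < ε) (x_ps : ℝ → ℝ)
    (hxps : ContDiffOn ℝ 1 x_ps (Set.Ioo (-ε) ε))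
    (hxps0 : x_ps 0 = 0)
    (hxps' : deriv x_ps 0 = β * δ / (β * δ + α)) :
    Filter.Tendsto (fun μ : ℝ => β * x_ps μ * (x_ps μ - μ) / μ ^ 2)
      (nhdsWithin 0 {(0 : ℝ)}ᶜ)
      (nhds (-(α * β ^ 2 * δ) / (β * δ + α) ^ 2)) ∧
    ∃ ε' > 0, ∀ μ : ℝ, 0 < |μ| → |μ| < ε' →
      (α * δ < 0 → 0 < β * x_ps μ * (x_ps μ - μ)) ∧
      (0 < α * δ → β * x_ps μ * (x_ps μ - μ) < 0) := by
  have hderiv : HasDerivAt x_ps (β * δ / (β * δ + α)) 0 := by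
    rw [← hxps']
    exact ((hxps.differentiableOn one_ne_zero).differentiableAt
      (Ioo_mem_nhds (by linarith) hε)).hasDerivAt
  have hlimit_eq : β * (β * δ / (β * δ + α)) * (β * δ / (β * δ + α) - 1)
      = -(α * β ^ 2 * δ) / (β * δ + α) ^ 2 := by
    field_simp
    ring
  have hlim := hlimit_eq ▸ tendsto_mul_sub_div_sq β
    (tendsto_div_self_of_hasDerivAt_zero hderiv hxps0)
  refine ⟨hlim, ?_⟩
  obtain ⟨ε', hε', hsign⟩ := exists_sign_of_tendsto_div_sq hlim
  have hlimit_sign : -(α * β ^ 2 * δ) / (β * δ + α) ^ 2 = -(α * δ) * (β / (β * δ + α)) ^ 2 := by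
    rw [div_pow]
    ring
  have hsq : 0 < (β / (β * δ + α)) ^ 2 := by positivity
  refine ⟨ε', hε', fun μ hμ0 hμε => ⟨fun hαδ => ?_, fun hαδ => ?_⟩⟩
  · exact (hsign μ hμ0 hμε).1 (by rw [hlimit_sign]; nlinarith)
  · exact (hsign μ hμ0 hμε).2 (by rw [hlimit_sign]; nlinarith)

/-- Membership dichotomy for the pseudo-equilibrium: the zero `x_ps(μ)` of the sliding
equation satisfies `β·x_ps(μ)·(x_ps(μ)−μ)/μ² → −αβ²δ/Ω²`, so for small `μ ≠ 0` the point
lies in the sliding region (`βx(x−μ) > 0`) iff `αδ < 0`, and in the crossing region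
(`βx(x−μ) < 0`) iff `αδ > 0`. -/
theorem pseudo_equilibrium_sliding_crossing_dichotomy
    (δ α β : ℝ) (hδ : δ = -1 ∨ δ = 1) (hα : α ≠ 0) (hβ : β ≠ 0)
    (hΩ : β * δ + α ≠ 0)
    (e₁ e₂ g h : ℝ × ℝ → ℝ)
    (he₁ : ContDiff ℝ 1 e₁) (he₂ : ContDiff ℝ 1 e₂)
    (hg : ContDiff ℝ 1 g) (hh : ContDiff ℝ 1 h)
    (he₁0 : e₁ (0, 0) = 0) (he₂0 : e₂ (0, 0) = 0)
    (hg0 : g (0, 0) = 0) (hh0 : h (0, 0) = 0)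
    (F : ℝ → ℝ → ℝ)
    (hF : ∀ x μ : ℝ, F x μ =
      (-β + h (x, μ)) * (x - μ) * (δ + e₁ (x, μ))
        - (1 + g (x, μ)) * x * (α + e₂ (x, μ)))
    (ε : ℝ) (hε : 0 < ε) (x_ps : ℝ → ℝ)
    (hxps : ContDiffOn ℝ 1 x_ps (Set.Ioo (-ε) ε))
    (hxps0 : x_ps 0 = 0)
    (hxps' : deriv x_ps 0 = β * δ / (β * δ + α))
    (hzero : ∀ μ : ℝ, |μ| < ε → F (x_ps μ) μ = 0) :
    Filter.Tendsto (fun μ : ℝ => β * x_ps μ * (x_ps μ - μ) / μ ^ 2)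
      (nhdsWithin 0 {(0 : ℝ)}ᶜ)
      (nhds (-(α * β ^ 2 * δ) / (β * δ + α) ^ 2)) ∧
    ∃ ε' > 0, ∀ μ : ℝ, 0 < |μ| → |μ| < ε' →
      (α * δ < 0 → 0 < β * x_ps μ * (x_ps μ - μ)) ∧
      (0 < α * δ → β * x_ps μ * (x_ps μ - μ) < 0) :=
  pseudo_equilibrium_sliding_crossing_dichotomy_general δ α β hβ hΩ ε hε x_ps hxps hxps0 hxps'
end

section
/- Let Δ ≠ 0 and let P : ℝ × ℝ → ℝ satisfy P(x,μ) = x + 2μ + Δx² + R(x,μ), where on some neighborhood of (0,0) the map x ↦ P(x,μ) is C¹ and for some C > 0: |R(x,μ)| ≤ C(|x|³ + |μ||x|) and |∂R/∂x(x,μ)| ≤ C(x² + |μ|). Then there exist μ₀ > 0 and a function x₀, defined for all μ with Δμ < 0 and |μ| < μ₀, such that x₀(μ) > 0, P(x₀(μ), μ) = x₀(μ), x₀(μ)/√(−2μ/Δ) → 1 as μ → 0 with Δμ < 0, and moreover: if Δ < 0 then 0 < ∂P/∂x(x₀(μ), μ) < 1 (the fixed point is attracting), while if Δ > 0 then ∂P/∂x(x₀(μ),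 μ) > 1 (the fixed point is repelling), for all such μ. -/
/-!
Put `s = √(-2μ/Δ)`, so that `x + 2μ + Δx² = x + Δ(x² - s²)` and `|μ| = |Δ| s² / 2`. On
`x ≍ s` the remainder is then `O(s³)`, so `(P(x, μ) - x) / Δ = x² - s² + O(s³)` changes sign on
`[s - Ks², s + Ks²]`, which traps a fixed point `x₀ = s + O(s²)`. There
`∂ₓP = 1 + 2Δx₀ + O(s²)`, and the term `2Δx₀ ≍ Δs` decides on which side of `1` it lies.
-/

open Set Filter Topology

lemma exists_zero_of_abs_sub_sq_sub_sq_le {g : ℝ → ℝ} {s K : ℝ} (hs : 0 ≤ s) (hK : 0 ≤ K)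
    (hKs : K * s ≤ 1) (hg : ContinuousOn g (Icc (s - K * s ^ 2) (s + K * s ^ 2)))
    (hquad : ∀ x ∈ Icc (s - K * s ^ 2) (s + K * s ^ 2), |g x - (x ^ 2 - s ^ 2)| ≤ K * s ^ 3) :
    ∃ x ∈ Icc (s - K * s ^ 2) (s + K * s ^ 2), g x = 0 := by
  have hKs3 : 0 ≤ K * s ^ 3 := by positivity
  have hle : s - K * s ^ 2 ≤ s + K * s ^ 2 := by nlinarith [mul_nonneg hK (sq_nonneg s)]
  have hlo : g (s - K * s ^ 2) ≤ 0 := by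
    have := (abs_le.mp (hquad _ ⟨le_rfl, hle⟩)).2
    nlinarith [mul_nonneg hKs3 (sub_nonneg.mpr hKs)]
  have hhi : 0 ≤ g (s + K * s ^ 2) := by
    have := (abs_le.mp (hquad _ ⟨hle, le_rfl⟩)).1
    nlinarith [mul_nonneg hKs3 (mul_nonneg hK hs)]
  exact intermediate_value_Icc hle hg ⟨hlo, hhi⟩

lemma tendsto_div_nhds_one_of_abs_sub_le {α : Type*} {l : Filter α} {f g : α → ℝ} {K : ℝ}
    (hg : Tendsto g l (𝓝 0)) (hg0 : ∀ᶠ a in l, 0 < g a)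
    (hfg : ∀ᶠ a in l, |f a - g a| ≤ K * g a ^ 2) :
    Tendsto (fun a => f a / g a) l (𝓝 1) := by
  rw [tendsto_iff_norm_sub_tendsto_zero]
  refine squeeze_zero' (Eventually.of_forall fun _ => norm_nonneg _) ?_
    (by simpa using hg.const_mul K)
  filter_upwards [hg0, hfg] with a ha hfga
  rw [Real.norm_eq_abs, div_sub_one ha.ne', abs_div, abs_of_pos ha, div_le_iff₀ ha]
  linarith

lemma cubic_remainder_bound_le {C K Δ μ s x : ℝ} (hC : 0 ≤ C) (hK : C * (8 + |Δ|) ≤ K * |Δ|)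
    (hμ : 2 * |μ| = |Δ| * s ^ 2) (hx : 0 ≤ x) (hxs : x ≤ 2 * s) :
    C * (|x| ^ 3 + |μ| * |x|) ≤ K * |Δ| * s ^ 3 := by
  rw [abs_of_nonneg hx]
  have hx3 : x ^ 3 ≤ 8 * s ^ 3 := by
    nlinarith [pow_le_pow_left₀ hx hxs 3]
  have hμx : |μ| * x ≤ |Δ| * s ^ 3 := by
    nlinarith [mul_le_mul_of_nonneg_left hxs (abs_nonneg μ)]
  calc C * (x ^ 3 + |μ| * x) ≤ C * (8 + |Δ|) * s ^ 3 := by nlinarith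
    _ ≤ K * |Δ| * s ^ 3 := by nlinarith [pow_nonneg (hx.trans hxs) 3]

lemma quadratic_remainder_bound_le {C K Δ μ s x : ℝ} (hC : 0 ≤ C) (hK : C * (8 + |Δ|) ≤ K * |Δ|)
    (hμ : 2 * |μ| = |Δ| * s ^ 2) (hx : 0 ≤ x) (hxs : x ≤ 2 * s) :
    C * (x ^ 2 + |μ|) ≤ K * |Δ| * s ^ 2 := by
  have hx2 : x ^ 2 + |μ| ≤ (8 + |Δ|) * s ^ 2 := by nlinarith [abs_nonneg Δ, sq_nonneg s]
  calc C * (x ^ 2 + |μ|) ≤ C * ((8 + |Δ|) * s ^ 2) := mul_le_mul_of_nonneg_left hx2 hC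
    _ = C * (8 + |Δ|) * s ^ 2 := by ring
    _ ≤ K * |Δ| * s ^ 2 := mul_le_mul_of_nonneg_right hK (sq_nonneg s)

lemma multiplier_bounds_of_abs_sub_le {Δ K s x d : ℝ} (hs : 0 < s) (hx : s / 2 ≤ x)
    (hxs : x ≤ 2 * s) (hd : |d - (1 + 2 * Δ * x)| ≤ K * |Δ| * s ^ 2) (hKs : 2 * K * s ≤ 1)
    (hΔs : 5 * |Δ| * s < 1) :
    (Δ < 0 → 0 < d ∧ d < 1) ∧ (0 < Δ → 1 < d) := by
  have hK : K * |Δ| * s ^ 2 ≤ |Δ| * s / 2 := by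
    nlinarith [mul_le_mul_of_nonneg_right hKs (mul_nonneg (abs_nonneg Δ) hs.le)]
  have hd' := abs_le.mp (hd.trans hK)
  refine ⟨fun hΔ => ?_, fun hΔ => ?_⟩
  · rw [abs_of_neg hΔ] at hd' hΔs
    exact ⟨by nlinarith, by nlinarith⟩
  · rw [abs_of_pos hΔ] at hd' hΔs
    nlinarith

lemma deriv_eq_deriv_sub_of_eq_add {Δ μ x : ℝ} {f e : ℝ → ℝ}
    (hfe : ∀ y, f y = y + 2 * μ + Δ * y ^ 2 + e y) (hf : DifferentiableAt ℝ f x) :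
    deriv e x = deriv f x - (1 + 2 * Δ * x) := by
  have hpoly : HasDerivAt (fun y => y + 2 * μ + Δ * y ^ 2) (1 + 2 * Δ * x) x := by
    refine (((hasDerivAt_id' x).add_const (2 * μ)).add
      ((hasDerivAt_pow 2 x).const_mul Δ)).congr_deriv ?_
    push_cast; ring
  have he : e = fun y => f y - (y + 2 * μ + Δ * y ^ 2) := funext fun y => by rw [hfe]; ring
  rw [he]
  exact (hf.hasDerivAt.sub hpoly).deriv

lemma exists_fixedPoint_near_sqrt {Δ C K r μ s : ℝ} {f e : ℝ → ℝ} (hΔ : Δ ≠ 0) (hC : 0 ≤ C)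
    (hK : C * (8 + |Δ|) ≤ K * |Δ|) (hfe : ∀ x, f x = x + 2 * μ + Δ * x ^ 2 + e x)
    (hf : ContDiffOn ℝ 1 f (Ioo (-r) r))
    (he : ∀ x, |x| < r → |e x| ≤ C * (|x| ^ 3 + |μ| * |x|))
    (he' : ∀ x, |x| < r → |deriv e x| ≤ C * (x ^ 2 + |μ|))
    (hs : 0 < s) (hμ : Δ * s ^ 2 = -2 * μ) (hsr : s < r / 2) (hKs : 2 * K * s ≤ 1)
    (hΔs : 5 * |Δ| * s < 1) :
    ∃ x, 0 < x ∧ f x = x ∧ (Δ < 0 → 0 < deriv f x ∧ deriv f x < 1) ∧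
      (0 < Δ → 1 < deriv f x) ∧ |x - s| ≤ K * s ^ 2 := by
  have hΔ0 : 0 < |Δ| := abs_pos.mpr hΔ
  have hK0 : 0 ≤ K := nonneg_of_mul_nonneg_left ((by positivity : 0 ≤ C * (8 + |Δ|)).trans hK) hΔ0
  have hμs : 2 * |μ| = |Δ| * s ^ 2 := by
    rw [← abs_of_nonneg (sq_nonneg s), ← abs_mul, hμ, abs_mul]; norm_num
  have hI : ∀ x ∈ Icc (s - K * s ^ 2) (s + K * s ^ 2), s / 2 ≤ x ∧ x ≤ 2 * s := fun x hx => by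
    constructor <;> nlinarith [hx.1, hx.2]
  have hIr : ∀ x ∈ Icc (s - K * s ^ 2) (s + K * s ^ 2), x ∈ Ioo (-r) r := fun x hx => by
    obtain ⟨h1, h2⟩ := hI x hx
    constructor <;> linarith
  have hquad : ∀ x, (f x - x) / Δ - (x ^ 2 - s ^ 2) = e x / Δ := fun x => by
    rw [hfe]; field_simp; linear_combination hμ
  obtain ⟨x, hxI, hx0⟩ := exists_zero_of_abs_sub_sq_sub_sq_le (g := fun x => (f x - x) / Δ)
    hs.le hK0 (by linarith) (((hf.continuousOn.mono hIr).sub continuousOn_id).div_const Δ)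
    (fun y hy => by
      rw [hquad, abs_div, div_le_iff₀ hΔ0]
      obtain ⟨h1, h2⟩ := hI y hy
      calc |e y| ≤ C * (|y| ^ 3 + |μ| * |y|) := he y (abs_lt.mpr (hIr y hy))
        _ ≤ K * s ^ 3 * |Δ| := by
          linarith [cubic_remainder_bound_le hC hK hμs (by linarith) h2])
  obtain ⟨hxs, hx2s⟩ := hI x hxI
  have hfx : f x = x := by
    have : f x - x = 0 := by simpa [hΔ] using hx0
    linarith
  have hde : deriv e x = deriv f x - (1 + 2 * Δ * x) :=
    deriv_eq_deriv_sub_of_eq_add hfe ((hf.differentiableOn one_ne_zero).differentiableAt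
      (isOpen_Ioo.mem_nhds (hIr x hxI)))
  have hde' : |deriv f x - (1 + 2 * Δ * x)| ≤ K * |Δ| * s ^ 2 := by
    rw [← hde]
    exact (he' x (abs_lt.mpr (hIr x hxI))).trans
      (quadratic_remainder_bound_le hC hK hμs (by linarith) hx2s)
  have hmult := multiplier_bounds_of_abs_sub_le hs hxs hx2s hde' hKs hΔs
  refine ⟨x, by linarith, hfx, hmult.1, hmult.2, abs_le.mpr ⟨?_, ?_⟩⟩ <;> linarith [hxI.1, hxI.2]

lemma pos_and_mul_sq_sqrt_neg_two_mul_div {Δ μ : ℝ} (h : Δ * μ < 0) :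
    0 < √(-2 * μ / Δ) ∧ Δ * √(-2 * μ / Δ) ^ 2 = -2 * μ := by
  have hΔ : Δ ≠ 0 := by rintro rfl; simp at h
  have hpos : 0 < -2 * μ / Δ := by
    rw [show -2 * μ / Δ = -2 * (Δ * μ) / Δ ^ 2 by field_simp]
    exact div_pos (by linarith) (by positivity)
  refine ⟨Real.sqrt_pos.mpr hpos, ?_⟩
  rw [Real.sq_sqrt hpos.le]
  field_simp

/-- Fixed points of the Poincaré map `P(x,μ) = x + 2μ + Δx² + O(x³ + μx)` of the
invisible two-fold `II₂`: for `Δμ < 0` small there is a fixed point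
`x₀(μ) ≈ √(−2μ/Δ) > 0`, attracting if `Δ < 0` and repelling if `Δ > 0`. -/
theorem pws_limit_cycles_II2
    (Δ : ℝ) (hΔ : Δ ≠ 0) (P R : ℝ → ℝ → ℝ)
    (hPR : ∀ x μ : ℝ, P x μ = x + 2 * μ + Δ * x ^ 2 + R x μ)
    (r C : ℝ) (hr : 0 < r) (hC : 0 < C)
    (hP1 : ∀ μ : ℝ, |μ| < r → ContDiffOn ℝ 1 (fun x => P x μ) (Set.Ioo (-r) r))
    (hRb : ∀ x μ : ℝ, |x| < r → |μ| < r → |R x μ| ≤ C * (|x| ^ 3 + |μ| * |x|))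
    (hRd : ∀ x μ : ℝ, |x| < r → |μ| < r →
      |deriv (fun x' => R x' μ) x| ≤ C * (x ^ 2 + |μ|)) :
    ∃ μ₀ > 0, ∃ x₀ : ℝ → ℝ,
      (∀ μ : ℝ, Δ * μ < 0 → |μ| < μ₀ →
        0 < x₀ μ ∧
        P (x₀ μ) μ = x₀ μ ∧
        (Δ < 0 → 0 < deriv (fun x => P x μ) (x₀ μ) ∧
          deriv (fun x => P x μ) (x₀ μ) < 1) ∧
        (0 < Δ → 1 < deriv (fun x => P x μ) (x₀ μ))) ∧
      Filter.Tendsto (fun μ : ℝ => x₀ μ / Real.sqrt (-2 * μ / Δ))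
        (nhdsWithin 0 {μ : ℝ | Δ * μ < 0}) (nhds 1) := by
  set l := 𝓝[{μ : ℝ | Δ * μ < 0}] (0 : ℝ)
  set K := C * (8 + |Δ|) / |Δ|
  have hK : C * (8 + |Δ|) ≤ K * |Δ| := (div_mul_cancel₀ _ (abs_ne_zero.mpr hΔ)).ge
  have hs : Tendsto (fun μ => √(-2 * μ / Δ)) l (𝓝 0) := by
    have hc : Continuous fun μ : ℝ => √(-2 * μ / Δ) := by fun_prop
    simpa using (hc.tendsto 0).mono_left nhdsWithin_le_nhds
  have hsmall (c : ℝ) : ∀ᶠ μ in l, c * √(-2 * μ / Δ) < 1 :=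
    (hs.const_mul c).eventually_lt_const (by simp)
  have hfix : ∀ᶠ μ in l, ∃ x, 0 < x ∧ P x μ = x ∧
      (Δ < 0 → 0 < deriv (fun x => P x μ) x ∧ deriv (fun x => P x μ) x < 1) ∧
      (0 < Δ → 1 < deriv (fun x => P x μ) x) ∧ |x - √(-2 * μ / Δ)| ≤ K * √(-2 * μ / Δ) ^ 2 := by
    filter_upwards [self_mem_nhdsWithin, hs.eventually_lt_const (half_pos hr), hsmall (2 * K),
      hsmall (5 * |Δ|), nhdsWithin_le_nhds (eventually_abs_sub_lt 0 hr)] with μ hμ hsr hKs hΔs hμr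
    rw [sub_zero] at hμr
    obtain ⟨hs0, hsμ⟩ := pos_and_mul_sq_sqrt_neg_two_mul_div hμ
    exact exists_fixedPoint_near_sqrt hΔ hC.le hK (hPR · μ) (hP1 μ hμr) (hRb · μ · hμr)
      (hRd · μ · hμr) hs0 hsμ hsr hKs.le hΔs
  obtain ⟨μ₀, hμ₀, hfix⟩ := Metric.eventually_nhds_iff.mp (eventually_nhdsWithin_iff.mp hfix)
  choose! x₀ hx₀ using fun μ => @hfix μ
  refine ⟨μ₀, hμ₀, x₀, fun μ hμ hμμ₀ => ?_, ?_⟩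
  · obtain ⟨hpos, hP, hattr, hrep, -⟩ := hx₀ μ (by rwa [Real.dist_0_eq_abs]) hμ
    exact ⟨hpos, hP, hattr, hrep⟩
  · refine tendsto_div_nhds_one_of_abs_sub_le (K := K) hs ?_ ?_ <;>
      filter_upwards [self_mem_nhdsWithin, nhdsWithin_le_nhds (Metric.ball_mem_nhds 0 hμ₀)]
        with μ hμ hμμ₀
    exacts [(pos_and_mul_sq_sqrt_neg_two_mul_div hμ).1, (hx₀ μ hμμ₀ hμ).2.2.2.2]
end

section
/- Let φ : [−1,1] → ℝ be continuous with φ(−1) = −1, φ(1) = 1, −1 < φ(ŷ) < 1 for all ŷ ∈ (−1,1), and φ differentiable on (−1,1) with φ'(ŷ) > 0 there. Let a, b ∈ ℝ with a·b < 0. Then: (i) there exists a unique ŷ ∈ (−1,1) with a(1+φ(ŷ)) + b(1−φ(ŷ)) = 0, and it satisfies φ(ŷ) = (a+b)/(b−a); (ii) the derivative at this ŷ of the map ŷ ↦ a(1+φ(ŷ)) + b(1−φ(ŷ)) equals φ'(ŷ)·(a−b), which is negative if a < 0 < b and positive if b < 0 < a; (iii) (1+φ(ŷ))/2 = b/(b−a),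 so that for all c₁, c₂ ∈ ℝ one has (c₁(1+φ(ŷ)) + c₂(1−φ(ŷ)))/2 = σc₁ + (1−σ)c₂ where σ = b/(b−a) is the Filippov convex coefficient. -/
/-! Since `a·b < 0`, `|a + b| < |b − a|`, so the level `t = (a+b)/(b−a)` lies strictly between
`φ(−1) = −1` and `φ(1) = 1`; the intermediate value theorem gives a solution of `φ ŷ = t`,
which is exactly the layer equation, and `φ' > 0` makes it unique. The layer right-hand side is
affine in `φ`, with slope `a − b`, and `(1 + t)/2 = b/(b − a)` is the Filippov coefficient. -/

open Set

section LayerAlgebra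

variable {a b : ℝ}

lemma sub_ne_zero_of_mul_neg (hab : a * b < 0) : b - a ≠ 0 := by
  intro h
  rw [← sub_eq_zero.mp h] at hab
  exact (mul_self_nonneg b).not_gt hab

lemma add_div_sub_mem_Ioo_of_mul_neg (hab : a * b < 0) : (a + b) / (b - a) ∈ Ioo (-1 : ℝ) 1 := by
  have hlt : |a + b| < |b - a| := sq_lt_sq.mp (by nlinarith)
  have hdiv : |(a + b) / (b - a)| < 1 := by
    rw [abs_div]
    exact (div_lt_one (abs_pos.mpr (sub_ne_zero_of_mul_neg hab))).mpr hlt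
  exact abs_lt.mp hdiv

lemma mul_one_add_add_mul_one_sub_eq_zero_iff (hba : b - a ≠ 0) (p : ℝ) :
    a * (1 + p) + b * (1 - p) = 0 ↔ p = (a + b) / (b - a) := by
  rw [eq_div_iff hba]
  constructor <;> intro h <;> linarith

lemma one_add_add_div_sub_div_two (hba : b - a ≠ 0) :
    (1 + (a + b) / (b - a)) / 2 = b / (b - a) := by
  field_simp
  ring

lemma mul_one_add_add_mul_one_sub_div_two (c₁ c₂ p : ℝ) :
    (c₁ * (1 + p) + c₂ * (1 - p)) / 2 = (1 + p) / 2 * c₁ + (1 - (1 + p) / 2) * c₂ := by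
  ring

end LayerAlgebra

lemma HasDerivAt.layer {φ : ℝ → ℝ} {d y : ℝ} (h : HasDerivAt φ d y) (a b : ℝ) :
    HasDerivAt (fun z => a * (1 + φ z) + b * (1 - φ z)) (d * (a - b)) y := by
  have h' := ((h.const_add 1).const_mul a).add ((h.const_sub 1).const_mul b)
  exact h'.congr_deriv (by ring)

lemma strictMonoOn_Ioo_of_hasDerivAt_pos {φ φ' : ℝ → ℝ} {l u : ℝ}
    (hderiv : ∀ y ∈ Ioo l u, HasDerivAt φ (φ' y) y) (hpos : ∀ y ∈ Ioo l u, 0 < φ' y) :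
    StrictMonoOn φ (Ioo l u) :=
  strictMonoOn_of_hasDerivWithinAt_pos (convex_Ioo l u)
    (fun y hy => (hderiv y hy).continuousAt.continuousWithinAt)
    (by rw [interior_Ioo]; exact fun y hy => (hderiv y hy).hasDerivWithinAt)
    (by rw [interior_Ioo]; exact hpos)

theorem critical_manifold_layer_equilibrium_general
    (φ φ' : ℝ → ℝ)
    (hcont : ContinuousOn φ (Set.Icc (-1) 1))
    (hφm : φ (-1) = -1) (hφp : φ 1 = 1)
    (hderiv : ∀ y ∈ Set.Ioo (-1 : ℝ) 1, HasDerivAt φ (φ' y) y)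
    (hpos : ∀ y ∈ Set.Ioo (-1 : ℝ) 1, 0 < φ' y)
    (a b : ℝ) (hab : a * b < 0) :
    ∃ y ∈ Set.Ioo (-1 : ℝ) 1,
      a * (1 + φ y) + b * (1 - φ y) = 0 ∧
      φ y = (a + b) / (b - a) ∧
      (∀ z ∈ Set.Ioo (-1 : ℝ) 1, a * (1 + φ z) + b * (1 - φ z) = 0 → z = y) ∧
      HasDerivAt (fun z => a * (1 + φ z) + b * (1 - φ z)) (φ' y * (a - b)) y ∧
      (a < 0 → 0 < b → φ' y * (a - b) < 0) ∧
      (b < 0 → 0 < a → 0 < φ' y * (a - b)) ∧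
      (1 + φ y) / 2 = b / (b - a) ∧
      (∀ c₁ c₂ : ℝ, (c₁ * (1 + φ y) + c₂ * (1 - φ y)) / 2
        = (b / (b - a)) * c₁ + (1 - b / (b - a)) * c₂) := by
  have hba := sub_ne_zero_of_mul_neg hab
  have hlevel : (a + b) / (b - a) ∈ Ioo (φ (-1)) (φ 1) := by
    rw [hφm, hφp]
    exact add_div_sub_mem_Ioo_of_mul_neg hab
  obtain ⟨y, hy, hφy⟩ := intermediate_value_Ioo (by norm_num) hcont hlevel
  have hσ : (1 + φ y) / 2 = b / (b - a) := hφy ▸ one_add_add_div_sub_div_two hba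
  refine ⟨y, hy, (mul_one_add_add_mul_one_sub_eq_zero_iff hba _).mpr hφy, hφy, ?_,
    (hderiv y hy).layer a b, fun ha hb => mul_neg_of_pos_of_neg (hpos y hy) (by linarith),
    fun hb ha => mul_pos (hpos y hy) (by linarith), hσ, ?_⟩
  · intro z hz hlayer
    have hφz := (mul_one_add_add_mul_one_sub_eq_zero_iff hba _).mp hlayer
    exact (strictMonoOn_Ioo_of_hasDerivAt_pos hderiv hpos).injOn hz hy (hφz.trans hφy.symm)
  · intro c₁ c₂
    rw [mul_one_add_add_mul_one_sub_div_two, hσ]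

/-- Pointwise content of Theorem 4.1: for a Sotomayor–Teixeira regularization function φ
and `a·b < 0`, the layer equation `a(1+φ(ŷ)) + b(1−φ(ŷ)) = 0` has a unique equilibrium
`ŷ ∈ (−1,1)`, with `φ(ŷ) = (a+b)/(b−a)`; the layer linearization there is `φ'(ŷ)(a−b)`,
negative for stable sliding `a < 0 < b` and positive for `b < 0 < a`; and the reduced
flow coincides with the Filippov convex combination with `σ = b/(b−a)`. -/
theorem critical_manifold_layer_equilibrium
    (φ φ' : ℝ → ℝ)
    (hcont : ContinuousOn φ (Set.Icc (-1) 1))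
    (hφm : φ (-1) = -1) (hφp : φ 1 = 1)
    (hrange : ∀ y ∈ Set.Ioo (-1 : ℝ) 1, -1 < φ y ∧ φ y < 1)
    (hderiv : ∀ y ∈ Set.Ioo (-1 : ℝ) 1, HasDerivAt φ (φ' y) y)
    (hpos : ∀ y ∈ Set.Ioo (-1 : ℝ) 1, 0 < φ' y)
    (a b : ℝ) (hab : a * b < 0) :
    ∃ y ∈ Set.Ioo (-1 : ℝ) 1,
      a * (1 + φ y) + b * (1 - φ y) = 0 ∧
      φ y = (a + b) / (b - a) ∧
      (∀ z ∈ Set.Ioo (-1 : ℝ) 1, a * (1 + φ z) + b * (1 - φ z) = 0 → z = y) ∧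
      HasDerivAt (fun z => a * (1 + φ z) + b * (1 - φ z)) (φ' y * (a - b)) y ∧
      (a < 0 → 0 < b → φ' y * (a - b) < 0) ∧
      (b < 0 → 0 < a → 0 < φ' y * (a - b)) ∧
      (1 + φ y) / 2 = b / (b - a) ∧
      (∀ c₁ c₂ : ℝ, (c₁ * (1 + φ y) + c₂ * (1 - φ y)) / 2
        = (b / (b - a)) * c₁ + (1 - b / (b - a)) * c₂) :=
  critical_manifold_layer_equilibrium_general φ φ' hcont hφm hφp hderiv hpos a b hab
end

section
/- Let λ > 0 and β > 0, and define u : ℝ → ℝ by u(x) := λ·e^{λβx²/2}·∫ₓ^∞ e^{−λβt²/2} dt. Then: (i) u is differentiable and u'(x) = λ(βx·u(x) − 1) for every x ∈ ℝ; (ii) x·u(x) → 1/β as x → +∞, so u decays only algebraically at +∞; (iii) e^{−λβx²/2}·u(x) → λ·√(2π/(λβ)) as x → −∞, so u grows like a Gaussian (exponentially) at −∞. -/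
/-!
With `c = λβ` and `F(x) = ∫ₓ^∞ e^{-ct²/2} dt`, we have `u = λ e^{cx²/2} F` and
`F' = -e^{-cx²/2}`, so the ODE is the product rule. At `+∞`, L'Hôpital's rule applied to
`F(x) / (e^{-cx²/2} / x)` gives Mills' ratio `x e^{cx²/2} F(x) → 1/c`; at `-∞`, `F` tends to the
full Gaussian integral `√(2π/c)`.
-/

open Real MeasureTheory Set Filter Topology intervalIntegral

section TailIntegral

variable {E : Type*} [NormedAddCommGroup E] [NormedSpace ℝ E] {f : ℝ → E}

theorem hasDerivAt_integral_Ioi [CompleteSpace E] {a x : ℝ} (hf : IntegrableOn f (Ioi a))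
    (hax : a < x) (hx : ContinuousAt f x) :
    HasDerivAt (fun y => ∫ t in Ioi y, f t) (-f x) x := by
  have hsplit : (fun y => ∫ t in Ioi y, f t) =ᶠ[𝓝 x]
      fun y => (∫ t in Ioi a, f t) - ∫ t in a..y, f t := by
    filter_upwards [Ioi_mem_nhds hax] with y hy
    rw [← integral_interval_add_Ioi hf (hf.mono_set (Ioi_subset_Ioi hy.le))]
    abel
  refine HasDerivAt.congr_of_eventuallyEq ?_ hsplit
  have hint : IntervalIntegrable f volume a x :=
    (intervalIntegrable_iff_integrableOn_Ioc_of_le hax.le).2 (hf.mono_set Ioc_subset_Ioi_self)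
  exact (integral_hasDerivAt_right hint
    (_root_.AEStronglyMeasurable.stronglyMeasurableAtFilter_of_mem hf.aestronglyMeasurable
      (Ioi_mem_nhds hax)) hx).const_sub _

theorem tendsto_integral_Ioi_atBot (hf : Integrable f) :
    Tendsto (fun x => ∫ t in Ioi x, f t) atBot (𝓝 (∫ t, f t)) :=
  (aecover_Ioi tendsto_id).integral_tendsto_of_countably_generated hf

end TailIntegral

section Gaussian

variable {c : ℝ}

theorem hasDerivAt_exp_mul_sq_div_two (a x : ℝ) :
    HasDerivAt (fun t => exp (a * t ^ 2 / 2)) (a * x * exp (a * x ^ 2 / 2)) x := by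
  have h := (((hasDerivAt_pow 2 x).const_mul a).div_const 2).exp
  exact h.congr_deriv (by push_cast; ring)

theorem integrable_exp_neg_mul_sq_div_two (hc : 0 < c) :
    Integrable fun t : ℝ => exp (-(c * t ^ 2 / 2)) := by
  convert integrable_exp_neg_mul_sq (half_pos hc) using 2
  ring_nf

theorem integral_exp_neg_mul_sq_div_two (c : ℝ) :
    ∫ t, exp (-(c * t ^ 2 / 2)) = √(2 * π / c) := by
  have hform : (fun t : ℝ => exp (-(c * t ^ 2 / 2))) = fun t => exp (-(c / 2) * t ^ 2) := by
    ext t; ring_nf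
  rw [hform, integral_gaussian]
  congr 1
  field_simp

theorem tendsto_mul_exp_mul_integral_Ioi_gaussian (hc : 0 < c) :
    Tendsto (fun x => x * exp (c * x ^ 2 / 2) * ∫ t in Ioi x, exp (-(c * t ^ 2 / 2)))
      atTop (𝓝 (1 / c)) := by
  have hderiv (x : ℝ) (hx : x ≠ 0) : HasDerivAt (fun t => t⁻¹ * exp (-(c * t ^ 2 / 2)))
      (-(c + (x ^ 2)⁻¹) * exp (-(c * x ^ 2 / 2))) x := by
    have hG : HasDerivAt (fun t => exp (-(c * t ^ 2 / 2)))
        (-(c * x) * exp (-(c * x ^ 2 / 2))) x := by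
      simpa only [neg_mul, neg_div] using hasDerivAt_exp_mul_sq_div_two (-c) x
    exact ((hasDerivAt_inv hx).mul hG).congr_deriv (by field_simp; ring)
  have hgauss : Tendsto (fun x => exp (-(c * x ^ 2 / 2))) atTop (𝓝 0) :=
    tendsto_exp_atBot.comp <| tendsto_neg_atTop_atBot.comp <|
      ((tendsto_pow_atTop two_ne_zero).const_mul_atTop hc).atTop_div_const two_pos
  have hcoeff : Tendsto (fun x : ℝ => c + (x ^ 2)⁻¹) atTop (𝓝 c) := by
    simpa using tendsto_const_nhds.add
      (tendsto_inv_atTop_zero.comp (tendsto_pow_atTop (α := ℝ) two_ne_zero))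
  have hratio : Tendsto
      (fun x => -exp (-(c * x ^ 2 / 2)) / (-(c + (x ^ 2)⁻¹) * exp (-(c * x ^ 2 / 2))))
      atTop (𝓝 (1 / c)) := by
    rw [one_div]
    refine (hcoeff.inv₀ hc.ne').congr fun x => ?_
    rw [neg_mul, neg_div_neg_eq, div_mul_cancel_right₀ (exp_pos _).ne']
  have h := HasDerivAt.lhopital_zero_atTop
    (Eventually.of_forall fun x => hasDerivAt_integral_Ioi
      (integrable_exp_neg_mul_sq_div_two hc).integrableOn (sub_one_lt x) (by fun_prop))
    ((eventually_ne_atTop 0).mono hderiv)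
    (Eventually.of_forall fun x => mul_ne_zero (neg_ne_zero.2 (by positivity)) (exp_pos _).ne')
    (tendsto_integral_Ioi_zero tendsto_id)
    (by simpa using tendsto_inv_atTop_zero.mul hgauss) hratio
  refine h.congr fun x => ?_
  rw [div_eq_mul_inv, mul_inv, inv_inv, ← exp_neg, neg_neg]
  ring

end Gaussian

/-- The solution `u(x) = λ e^{λβx²/2} ∫ₓ^∞ e^{−λβt²/2} dt` of the variational equation
`u' = λ(βxu − 1)` (λ, β > 0): it satisfies the ODE, decays only algebraically at `+∞`
(`x·u(x) → 1/β`), and grows like a Gaussian at `−∞`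
(`e^{−λβx²/2} u(x) → λ√(2π/(λβ))`). -/
theorem variational_solution_asymptotics
    (l β : ℝ) (hl : 0 < l) (hβ : 0 < β) (u : ℝ → ℝ)
    (hu : ∀ x : ℝ, u x =
      l * Real.exp (l * β * x ^ 2 / 2) * ∫ t in Set.Ioi x, Real.exp (-(l * β * t ^ 2 / 2))) :
    (∀ x : ℝ, HasDerivAt u (l * (β * x * u x - 1)) x) ∧
    Filter.Tendsto (fun x : ℝ => x * u x) Filter.atTop (nhds (1 / β)) ∧
    Filter.Tendsto (fun x : ℝ => Real.exp (-(l * β * x ^ 2 / 2)) * u x) Filter.atBot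
      (nhds (l * Real.sqrt (2 * Real.pi / (l * β)))) := by
  have hc : 0 < l * β := mul_pos hl hβ
  have hg := integrable_exp_neg_mul_sq_div_two hc
  have hcancel (x : ℝ) : exp (l * β * x ^ 2 / 2) * exp (-(l * β * x ^ 2 / 2)) = 1 := by
    rw [← exp_add, add_neg_cancel, exp_zero]
  refine ⟨fun x => ?_, ?_, ?_⟩
  · have h := ((hasDerivAt_exp_mul_sq_div_two (l * β) x).const_mul l).mul
      (hasDerivAt_integral_Ioi hg.integrableOn (sub_one_lt x) (by fun_prop))
    refine (h.congr_of_eventuallyEq (Eventually.of_forall hu)).congr_deriv ?_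
    rw [hu x]
    linear_combination -l * hcancel x
  · have h := (tendsto_mul_exp_mul_integral_Ioi_gaussian hc).const_mul l
    rw [mul_one_div, div_mul_cancel_left₀ hl.ne', ← one_div] at h
    refine h.congr fun x => ?_
    rw [hu x]
    ring
  · have h := (tendsto_integral_Ioi_atBot hg).const_mul l
    rw [integral_exp_neg_mul_sq_div_two] at h
    refine h.congr fun x => ?_
    rw [hu x]
    linear_combination (-(l * ∫ t in Ioi x, exp (-(l * β * t ^ 2 / 2)))) * hcancel x
end

section
/- Let α ≠ 0, β ≠ 0, Ω ≠ 0, w₁ < 0 and μ₂ ∈ ℝ, and let A be the real 2×2 matrix with first row (0, α·w₁) and second row (Ω/α, αβΩ⁻¹w₁μ₂). Then det A = −Ω·w₁ and tr A = αβΩ⁻¹w₁μ₂. If Ω < 0, then A has two real eigenvalues λ₋ < 0 < λ₊ (a saddle), and λ₊ = −λ₋ (a neutral saddle) if and only if μ₂ = 0. -/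
/-!
The characteristic polynomial of a real `2 × 2` matrix is `X² - (tr A) X + det A`. When
`det A < 0` its discriminant is positive and the product of its two real roots is negative, so
`A` has exactly one negative and one positive eigenvalue, and they sum to `tr A`. Here
`det A = -Ω w₁ < 0` for `Ω < 0`, and `tr A` is a nonzero multiple of `μ₂`.
-/

open Module.End

theorem exists_neg_pos_roots_of_neg {t d : ℝ} (hd : d < 0) :
    ∃ lm lp : ℝ, lm < 0 ∧ 0 < lp ∧ lm + lp = t ∧
      ∀ l : ℝ, l ^ 2 - t * l + d = 0 ↔ l = lm ∨ l = lp := by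
  set s := Real.sqrt (t ^ 2 - 4 * d)
  have hs : s ^ 2 = t ^ 2 - 4 * d := Real.sq_sqrt (by nlinarith [sq_nonneg t])
  have hs_pos : 0 < s := Real.sqrt_pos.mpr (by nlinarith [sq_nonneg t])
  have hprod : (t - s) / 2 * ((t + s) / 2) = d := by linear_combination -hs / 4
  obtain ⟨hlm, hlp⟩ : (t - s) / 2 < 0 ∧ 0 < (t + s) / 2 := by
    rcases mul_neg_iff.mp (hprod.trans_lt hd) with ⟨hpos, hneg⟩ | hsigns
    · linarith
    · exact hsigns
  refine ⟨(t - s) / 2, (t + s) / 2, hlm, hlp, by ring, fun l => ?_⟩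
  have hfactor : l ^ 2 - t * l + d = (l - (t - s) / 2) * (l - (t + s) / 2) := by
    linear_combination -hprod
  rw [hfactor, mul_eq_zero, sub_eq_zero, sub_eq_zero]

theorem Matrix.hasEigenvalue_toLin'_fin_two_iff {R : Type*} [CommRing R] [IsDomain R]
    (A : Matrix (Fin 2) (Fin 2) R) (l : R) :
    HasEigenvalue (Matrix.toLin' A) l ↔ l ^ 2 - A.trace * l + A.det = 0 := by
  rw [hasEigenvalue_iff_isRoot_charpoly, Matrix.charpoly_toLin', Matrix.charpoly_fin_two]
  simp

theorem Matrix.exists_neg_pos_eigenvalues_of_det_neg (A : Matrix (Fin 2) (Fin 2) ℝ)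
    (hA : A.det < 0) :
    ∃ lm lp : ℝ, lm < 0 ∧ 0 < lp ∧ lm + lp = A.trace ∧
      ∀ l : ℝ, HasEigenvalue (Matrix.toLin' A) l ↔ l = lm ∨ l = lp := by
  obtain ⟨lm, lp, hlm, hlp, hsum, hroots⟩ := exists_neg_pos_roots_of_neg (t := A.trace) hA
  exact ⟨lm, lp, hlm, hlp, hsum, fun l => (A.hasEigenvalue_toLin'_fin_two_iff l).trans (hroots l)⟩

theorem regularized_pseudo_equilibrium_saddle_general
    (α β Ω w₁ μ₂ : ℝ) (hα : α ≠ 0) (hβ : β ≠ 0) (hw : w₁ < 0)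
    (A : Matrix (Fin 2) (Fin 2) ℝ)
    (hA : A = !![0, α * w₁; Ω / α, α * β * Ω⁻¹ * w₁ * μ₂]) :
    A.det = -(Ω * w₁) ∧
    A.trace = α * β * Ω⁻¹ * w₁ * μ₂ ∧
    (Ω < 0 → ∃ lm lp : ℝ, lm < 0 ∧ 0 < lp ∧
      Module.End.HasEigenvalue (Matrix.toLin' A) lm ∧
      Module.End.HasEigenvalue (Matrix.toLin' A) lp ∧
      (∀ l : ℝ, Module.End.HasEigenvalue (Matrix.toLin' A) l → l = lm ∨ l = lp) ∧
      (lp = -lm ↔ μ₂ = 0)) := by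
  have hdet : A.det = -(Ω * w₁) := by
    rw [hA, Matrix.det_fin_two_of, zero_mul, zero_sub, neg_inj]
    field_simp
  have htr : A.trace = α * β * Ω⁻¹ * w₁ * μ₂ := by
    rw [hA, Matrix.trace_fin_two_of, zero_add]
  refine ⟨hdet, htr, fun hΩ => ?_⟩
  have hdet_neg : A.det < 0 := by rw [hdet]; exact neg_neg_of_pos (mul_pos_of_neg_of_neg hΩ hw)
  obtain ⟨lm, lp, hlm, hlp, hsum, heig⟩ := A.exists_neg_pos_eigenvalues_of_det_neg hdet_neg
  have hcoef : α * β * Ω⁻¹ * w₁ ≠ 0 :=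
    mul_ne_zero (mul_ne_zero (mul_ne_zero hα hβ) (inv_ne_zero hΩ.ne)) hw.ne
  refine ⟨lm, lp, hlm, hlp, (heig lm).mpr (.inl rfl), (heig lp).mpr (.inr rfl),
    fun l => (heig l).mp, ?_⟩
  calc lp = -lm ↔ A.trace = 0 := by rw [eq_neg_iff_add_eq_zero, add_comm, hsum]
    _ ↔ μ₂ = 0 := by rw [htr, mul_eq_zero, or_iff_right hcoef]

/-- The Ω < 0 part of Lemma 7.1: the linearization
`A = !![0, αw₁; Ω/α, αβΩ⁻¹w₁μ₂]` has `det A = −Ωw₁`, `tr A = αβΩ⁻¹w₁μ₂`, and for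
`Ω < 0` it is a saddle: two real eigenvalues `λ₋ < 0 < λ₊`, neutral (`λ₊ = −λ₋`)
iff `μ₂ = 0`. -/
theorem regularized_pseudo_equilibrium_saddle
    (α β Ω w₁ μ₂ : ℝ) (hα : α ≠ 0) (hβ : β ≠ 0) (hΩ : Ω ≠ 0) (hw : w₁ < 0)
    (A : Matrix (Fin 2) (Fin 2) ℝ)
    (hA : A = !![0, α * w₁; Ω / α, α * β * Ω⁻¹ * w₁ * μ₂]) :
    A.det = -(Ω * w₁) ∧
    A.trace = α * β * Ω⁻¹ * w₁ * μ₂ ∧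
    (Ω < 0 → ∃ lm lp : ℝ, lm < 0 ∧ 0 < lp ∧
      Module.End.HasEigenvalue (Matrix.toLin' A) lm ∧
      Module.End.HasEigenvalue (Matrix.toLin' A) lp ∧
      (∀ l : ℝ, Module.End.HasEigenvalue (Matrix.toLin' A) l → l = lm ∨ l = lp) ∧
      (lp = -lm ↔ μ₂ = 0)) :=
  regularized_pseudo_equilibrium_saddle_general α β Ω w₁ μ₂ hα hβ hw A hA
end

section
/- Let δ ∈ {−1,1}, α ∈ ℝ with αδ < 0, β ≠ 0, Ω > 0, w₁ < 0, μ₂ ∈ ℝ, and let A be the real 2×2 matrix with first row (0, α·w₁) and second row (Ω/α, αβΩ⁻¹w₁μ₂). Set μ_F := 2Ω^{3/2}/(√(−w₁)·|αβ|). Then: (i) the characteristic polynomial λ² − (tr A)·λ + det A has no real root if and only if |μ₂| < μ_F, and has only real roots if and only if |μ₂| ≥ μ_F; (ii) the common sign of the real parts of the complex eigenvalues of A equals the sign of βδΩ⁻¹μ₂; in particular both eigenvalues have negative real part if and only if βδΩ⁻¹μ₂ < 0, both have positive real part if and only if βδΩ⁻¹μ₂ > 0, and the eigenvalues are purely imaginary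 and nonzero if and only if μ₂ = 0. -/
lemma quad_aux (T D S m mF : ℝ) (hD : 0 < D) (hmF : 0 < mF)
    (hsq : 4 * D ≤ T ^ 2 ↔ mF ≤ |m|)
    (hTneg : T < 0 ↔ S < 0) (hTpos : 0 < T ↔ 0 < S) (hT0 : T = 0 ↔ m = 0) :
    ((¬ ∃ l : ℝ, l ^ 2 - T * l + D = 0) ↔ |m| < mF) ∧
    ((∃ l : ℝ, l ^ 2 - T * l + D = 0) ↔ mF ≤ |m|) ∧
    ((∀ z : ℂ, z ^ 2 - (T : ℂ) * z + (D : ℂ) = 0 → z.re < 0) ↔ S < 0) ∧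
    ((∀ z : ℂ, z ^ 2 - (T : ℂ) * z + (D : ℂ) = 0 → 0 < z.re) ↔ 0 < S) ∧
    ((∀ z : ℂ, z ^ 2 - (T : ℂ) * z + (D : ℂ) = 0 → z.re = 0 ∧ z ≠ 0) ↔ m = 0) := by
  -- real-root characterization
  have hreal : (∃ l : ℝ, l ^ 2 - T * l + D = 0) ↔ 4 * D ≤ T ^ 2 := by
    constructor
    · rintro ⟨l, hl⟩; nlinarith [sq_nonneg (2 * l - T)]
    · intro h
      have h1 : Real.sqrt (T ^ 2 - 4 * D) ^ 2 = T ^ 2 - 4 * D :=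
        Real.sq_sqrt (by linarith)
      exact ⟨(T + Real.sqrt (T ^ 2 - 4 * D)) / 2, by nlinarith [h1]⟩
  -- structure of complex roots
  have hroot : ∀ z : ℂ, z ^ 2 - (T : ℂ) * z + (D : ℂ) = 0 →
      (z.im ≠ 0 ∧ z.re = T / 2) ∨
      (z.im = 0 ∧ z.re ^ 2 - T * z.re + D = 0) := by
    intro z hz
    have h1 := congrArg Complex.re hz
    have h2 := congrArg Complex.im hz
    simp [pow_two, Complex.mul_re, Complex.mul_im] at h1 h2
    by_cases him : z.im = 0
    · right; refine ⟨him, ?_⟩; rw [him] at h1; nlinarith [h1]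
    · left
      refine ⟨him, ?_⟩
      have : z.im * (z.re * 2 - T) = 0 := by nlinarith [h2]
      rcases mul_eq_zero.mp this with h | h
      · exact absurd h him
      · linarith
  -- sign facts for real roots
  have hsign : ∀ x : ℝ, x ^ 2 - T * x + D = 0 →
      x ≠ 0 ∧ (x < 0 ↔ T < 0) ∧ (0 < x ↔ 0 < T) := by
    intro x hx
    have hx0 : x ≠ 0 := by intro h; rw [h] at hx; nlinarith
    refine ⟨hx0, ?_, ?_⟩
    · constructor
      · intro h; nlinarith
      · intro h; by_contra h'; push_neg at h'
        have : 0 < x := lt_of_le_of_ne h' (Ne.symm hx0)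
        nlinarith
    · constructor
      · intro h; nlinarith
      · intro h; by_contra h'; push_neg at h'
        have : x < 0 := lt_of_le_of_ne h' hx0
        nlinarith
  -- existence of a complex root with sign of re matching sign of T
  have hex : ∃ z : ℂ, z ^ 2 - (T : ℂ) * z + (D : ℂ) = 0 ∧
      (z.re < 0 ↔ T < 0) ∧ (0 < z.re ↔ 0 < T) := by
    rcases le_or_gt (4 * D) (T ^ 2) with h | h
    · have h1 : Real.sqrt (T ^ 2 - 4 * D) ^ 2 = T ^ 2 - 4 * D :=
        Real.sq_sqrt (by linarith)
      have h0 : 0 ≤ Real.sqrt (T ^ 2 - 4 * D) := Real.sqrt_nonneg _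
      set s := Real.sqrt (T ^ 2 - 4 * D) with hs
      refine ⟨(((T + s) / 2 : ℝ) : ℂ), ?_, ?_, ?_⟩
      · have : ((T + s) / 2) ^ 2 - T * ((T + s) / 2) + D = 0 := by nlinarith [h1]
        calc (((T + s) / 2 : ℝ) : ℂ) ^ 2 - (T : ℂ) * (((T + s) / 2 : ℝ) : ℂ) + (D : ℂ)
            = ((((T + s) / 2) ^ 2 - T * ((T + s) / 2) + D : ℝ) : ℂ) := by push_cast; ring
          _ = 0 := by rw [this]; simp
      · simp only [Complex.ofReal_re]
        have hT : T ≠ 0 := by intro h'; rw [h'] at h; nlinarith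
        constructor
        · intro h'
          rcases lt_trichotomy T 0 with h'' | h'' | h''
          · exact h''
          · exact absurd h'' hT
          · nlinarith
        · intro h'
          have hs' : s < -T := by nlinarith
          linarith
      · simp only [Complex.ofReal_re]
        have hT : T ≠ 0 := by intro h'; rw [h'] at h; nlinarith
        constructor
        · intro h'
          rcases lt_trichotomy T 0 with h'' | h'' | h''
          · have hs' : s < -T := by nlinarith
            linarith
          · exact absurd h'' hT
          · exact h''
        · intro h'; linarith
    · have h1 : Real.sqrt (D - T ^ 2 / 4) ^ 2 = D - T ^ 2 / 4 :=
        Real.sq_sqrt (by nlinarith)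
      set y := Real.sqrt (D - T ^ 2 / 4) with hy
      refine ⟨((T / 2 : ℝ) : ℂ) + (y : ℝ) * Complex.I, ?_, ?_, ?_⟩
      · apply Complex.ext
        · simp [pow_two, Complex.mul_re, Complex.mul_im]
          nlinarith [h1]
        · simp [pow_two, Complex.mul_re, Complex.mul_im]
          ring
      · simp only [Complex.add_re, Complex.ofReal_re, Complex.mul_re,
          Complex.I_re, Complex.I_im, Complex.ofReal_im]
        constructor <;> intro <;> linarith
      · simp only [Complex.add_re, Complex.ofReal_re, Complex.mul_re,
          Complex.I_re, Complex.I_im, Complex.ofReal_im]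
        constructor <;> intro <;> linarith
  refine ⟨?_, ?_, ?_, ?_, ?_⟩
  · rw [hreal, hsq]; exact not_le
  · rw [hreal, hsq]
  · constructor
    · intro h
      obtain ⟨z, hz, hzneg, _⟩ := hex
      exact hTneg.mp (hzneg.mp (h z hz))
    · intro hS z hz
      have hT : T < 0 := hTneg.mpr hS
      rcases hroot z hz with ⟨_, hre⟩ | ⟨_, hre⟩
      · rw [hre]; linarith
      · exact ((hsign z.re hre).2.1).mpr hT
  · constructor
    · intro h
      obtain ⟨z, hz, _, hzpos⟩ := hex
      exact hTpos.mp (hzpos.mp (h z hz))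
    · intro hS z hz
      have hT : 0 < T := hTpos.mpr hS
      rcases hroot z hz with ⟨_, hre⟩ | ⟨_, hre⟩
      · rw [hre]; linarith
      · exact ((hsign z.re hre).2.2).mpr hT
  · constructor
    · intro h
      obtain ⟨z, hz, hzneg, hzpos⟩ := hex
      have hre := (h z hz).1
      apply hT0.mp
      by_contra hT
      rcases lt_trichotomy T 0 with h' | h' | h'
      · have := hzneg.mpr h'; linarith
      · exact hT h'
      · have := hzpos.mpr h'; linarith
    · intro hm z hz
      have hT : T = 0 := hT0.mpr hm
      rcases hroot z hz with ⟨him, hre⟩ | ⟨him, hre⟩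
      · refine ⟨by rw [hre, hT]; norm_num, ?_⟩
        intro h0; rw [h0] at him; simp at him
      · exfalso; rw [hT] at hre; nlinarith

set_option maxHeartbeats 1600000 in
/-- The Ω > 0 part of Lemma 7.1: with `A = !![0, αw₁; Ω/α, αβΩ⁻¹w₁μ₂]` and
`μ_F = 2Ω^{3/2}/(√(−w₁)|αβ|)`, the characteristic polynomial `λ² − (tr A)λ + det A`
has no real root iff `|μ₂| < μ_F` (focus) and a real root iff `|μ₂| ≥ μ_F` (node);
both complex eigenvalues have negative (positive) real part iff `βδΩ⁻¹μ₂ < 0` (`> 0`),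
and they are purely imaginary and nonzero iff `μ₂ = 0` (Hopf). -/
theorem regularized_pseudo_equilibrium_focus_node_hopf
    (δ α β Ω w₁ μ₂ : ℝ) (hδ : δ = -1 ∨ δ = 1) (hαδ : α * δ < 0)
    (hβ : β ≠ 0) (hΩ : 0 < Ω) (hw : w₁ < 0)
    (A : Matrix (Fin 2) (Fin 2) ℝ)
    (hA : A = !![0, α * w₁; Ω / α, α * β * Ω⁻¹ * w₁ * μ₂])
    (μF : ℝ) (hμF : μF = 2 * Real.sqrt (Ω ^ 3) / (Real.sqrt (-w₁) * |α * β|)) :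
    ((¬ ∃ l : ℝ, l ^ 2 - A.trace * l + A.det = 0) ↔ |μ₂| < μF) ∧
    ((∃ l : ℝ, l ^ 2 - A.trace * l + A.det = 0) ↔ μF ≤ |μ₂|) ∧
    ((∀ z : ℂ, z ^ 2 - (A.trace : ℂ) * z + (A.det : ℂ) = 0 → z.re < 0)
      ↔ β * δ * Ω⁻¹ * μ₂ < 0) ∧
    ((∀ z : ℂ, z ^ 2 - (A.trace : ℂ) * z + (A.det : ℂ) = 0 → 0 < z.re)
      ↔ 0 < β * δ * Ω⁻¹ * μ₂) ∧
    ((∀ z : ℂ, z ^ 2 - (A.trace : ℂ) * z + (A.det : ℂ) = 0 → z.re = 0 ∧ z ≠ 0)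
      ↔ μ₂ = 0) := by
  have hα : α ≠ 0 := by
    intro h; rw [h] at hαδ; simp at hαδ
  have hδ2 : δ * δ = 1 := by rcases hδ with rfl | rfl <;> norm_num
  have hc : 0 < α * w₁ * δ := by
    rcases hδ with rfl | rfl
    · have : 0 < α := by nlinarith
      nlinarith
    · have : α < 0 := by nlinarith
      nlinarith
  have hnw : (0:ℝ) < -w₁ := by linarith
  have hab : (0:ℝ) < (α * β) ^ 2 := by positivity
  have hTr : A.trace = α * β * Ω⁻¹ * w₁ * μ₂ := by
    rw [hA, Matrix.trace_fin_two_of]; ring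
  have hDet : A.det = Ω * -w₁ := by
    rw [hA, Matrix.det_fin_two_of]; field_simp; ring
  have hD : 0 < Ω * -w₁ := mul_pos hΩ hnw
  have h1 : Real.sqrt (Ω ^ 3) ^ 2 = Ω ^ 3 := Real.sq_sqrt (by positivity)
  have h2 : Real.sqrt (-w₁) ^ 2 = -w₁ := Real.sq_sqrt (by linarith)
  have h2' : 0 < Real.sqrt (-w₁) := Real.sqrt_pos.mpr hnw
  have h3 : |α * β| ^ 2 = (α * β) ^ 2 := sq_abs _
  have h3' : 0 < |α * β| := abs_pos.mpr (mul_ne_zero hα hβ)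
  have hmF : 0 < μF := by
    rw [hμF]
    have h4 : 0 < Real.sqrt (Ω ^ 3) := Real.sqrt_pos.mpr (by positivity)
    exact div_pos (by linarith) (mul_pos h2' h3')
  have hμF2 : μF ^ 2 * (-w₁ * (α * β) ^ 2) = 4 * Ω ^ 3 := by
    have hd : -w₁ * (α * β) ^ 2 ≠ 0 := ne_of_gt (mul_pos hnw hab)
    rw [hμF, div_pow, mul_pow, mul_pow, h1, h2, h3, div_mul_cancel₀ _ hd]
    norm_num
  have hTalt : α * β * Ω⁻¹ * w₁ * μ₂ = α * β * w₁ * μ₂ / Ω := by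
    field_simp
  have hsq : 4 * (Ω * -w₁) ≤ (α * β * Ω⁻¹ * w₁ * μ₂) ^ 2 ↔ μF ≤ |μ₂| := by
    have key : 4 * (Ω * -w₁) ≤ (α * β * Ω⁻¹ * w₁ * μ₂) ^ 2 ↔ μF ^ 2 ≤ μ₂ ^ 2 := by
      rw [hTalt, div_pow, le_div_iff₀ (by positivity : (0:ℝ) < Ω ^ 2)]
      constructor
      · intro h
        nlinarith [hμF2, mul_pos hnw hab, sq_nonneg μ₂, sq_nonneg μF,
          mul_pos (mul_pos hnw hab) hnw]
      · intro h
        nlinarith [hμF2, mul_pos hnw hab, sq_nonneg μ₂, sq_nonneg μF,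
          mul_pos (mul_pos hnw hab) hnw]
    rw [key]
    constructor
    · intro h
      by_contra h'
      push_neg at h'
      nlinarith [abs_nonneg μ₂, sq_abs μ₂]
    · intro h
      nlinarith [abs_nonneg μ₂, sq_abs μ₂]
  have hTS : α * β * Ω⁻¹ * w₁ * μ₂ = (α * w₁ * δ) * (β * δ * Ω⁻¹ * μ₂) := by
    linear_combination (-(α * β * Ω⁻¹ * w₁ * μ₂)) * hδ2
  have hgen : ∀ c x : ℝ, 0 < c → ((c * x < 0 ↔ x < 0) ∧ (0 < c * x ↔ 0 < x)) := by
    intro c x hcx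
    constructor
    · constructor
      · intro h
        by_contra h'
        push_neg at h'
        exact absurd (mul_nonneg hcx.le h') (not_le.mpr h)
      · exact fun h => mul_neg_of_pos_of_neg hcx h
    · constructor
      · intro h
        by_contra h'
        push_neg at h'
        exact absurd (mul_nonpos_of_nonneg_of_nonpos hcx.le h') (not_le.mpr h)
      · exact fun h => mul_pos hcx h
  have hTneg : α * β * Ω⁻¹ * w₁ * μ₂ < 0 ↔ β * δ * Ω⁻¹ * μ₂ < 0 := by
    rw [hTS]; exact (hgen _ _ hc).1
  have hTpos : 0 < α * β * Ω⁻¹ * w₁ * μ₂ ↔ 0 < β * δ * Ω⁻¹ * μ₂ := by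
    rw [hTS]; exact (hgen _ _ hc).2
  have hT0 : α * β * Ω⁻¹ * w₁ * μ₂ = 0 ↔ μ₂ = 0 := by
    have hcoef : α * β * Ω⁻¹ * w₁ ≠ 0 :=
      mul_ne_zero (mul_ne_zero (mul_ne_zero hα hβ) (inv_ne_zero (ne_of_gt hΩ)))
        (ne_of_lt hw)
    constructor
    · intro h
      rcases mul_eq_zero.mp h with h' | h'
      · exact absurd h' hcoef
      · exact h'
    · intro h; rw [h]; ring
  rw [hTr, hDet]
  exact quad_aux _ _ _ μ₂ μF hD hmF hsq hTneg hTpos hT0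
end

section
/- Let δ ∈ {−1,1} and α, β, ζ⁺, ζ⁻, η⁺, η⁻, χ⁺, χ⁻ ∈ ℝ with Ω := βδ + α > 0, αδ < 0, and δ(ζ⁻+χ⁻) − α(ζ⁺+χ⁺) ≠ 0. For p₁ > 0 and p₂, p₃ ∈ ℝ define a₂(p₁,p₂,p₃) := ((α−δ)·p₁²/(16Ω²))·((β+1)²(δζ⁻ − αζ⁺) − (α−δ)²(η⁻ + βη⁺)) + ((β+1)·p₂/(16Ω))·(δχ⁻ − αχ⁺) + (1/8)·(p₃/(p₁(α−δ)) − p₂²/(p₁²(α−δ)) − (β+1)p₂/Ω)·(δ(ζ⁻+χ⁻) − α(ζ⁺+χ⁺)). Then for every c ∈ ℝ there exist p₁ > 0 and p₂, p₃ ∈ ℝ with a₂(p₁,p₂,p₃) = c; in particular a₂ attains negative, zero and positive values. -/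
/-! At `p₁ = 1`, `p₂ = 0` the coefficient `a₂` is an affine function of `p₃` with slope
`(δ(ζ⁻+χ⁻) − α(ζ⁺+χ⁺)) / (8(α − δ))`, which is nonzero, so `p₃` alone reaches every value. -/

lemma sub_ne_zero_of_mul_neg_s16 {R : Type*} [Ring R] [LinearOrder R] [IsStrictOrderedRing R]
    {α δ : R} (h : α * δ < 0) : α - δ ≠ 0 := by
  rw [sub_ne_zero]
  rintro rfl
  exact (mul_self_nonneg α).not_gt h

lemma exists_mul_add_eq {K : Type*} [Field K] {a : K} (ha : a ≠ 0) (b c : K) :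
    ∃ x, a * x + b = c :=
  ⟨(c - b) / a, by rw [mul_div_cancel₀ _ ha, sub_add_cancel]⟩

theorem lyapunov_coefficient_attains_all_values_general
    (δ α β ζp ζm ηp ηm χp χm : ℝ)
    (hαδ : α * δ < 0)
    (hne : δ * (ζm + χm) - α * (ζp + χp) ≠ 0) :
    ∀ c : ℝ, ∃ p₁ p₂ p₃ : ℝ, 0 < p₁ ∧
      ((α - δ) * p₁ ^ 2 / (16 * (β * δ + α) ^ 2))
          * ((β + 1) ^ 2 * (δ * ζm - α * ζp) - (α - δ) ^ 2 * (ηm + β * ηp))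
        + ((β + 1) * p₂ / (16 * (β * δ + α))) * (δ * χm - α * χp)
        + (1 / 8) * (p₃ / (p₁ * (α - δ)) - p₂ ^ 2 / (p₁ ^ 2 * (α - δ))
            - (β + 1) * p₂ / (β * δ + α))
          * (δ * (ζm + χm) - α * (ζp + χp)) = c := by
  intro c
  have hslope : (δ * (ζm + χm) - α * (ζp + χp)) / (8 * (α - δ)) ≠ 0 :=
    div_ne_zero hne (mul_ne_zero (by norm_num) (sub_ne_zero_of_mul_neg_s16 hαδ))
  obtain ⟨p₃, hp₃⟩ := exists_mul_add_eq hslope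
    ((α - δ) / (16 * (β * δ + α) ^ 2)
      * ((β + 1) ^ 2 * (δ * ζm - α * ζp) - (α - δ) ^ 2 * (ηm + β * ηp))) c
  refine ⟨1, 0, p₃, one_pos, ?_⟩
  rw [← hp₃]
  -- `ring` cannot cancel inverses of sums, so `α - δ` and `β * δ + α` are made atoms.
  generalize α - δ = d
  generalize β * δ + α = Ω
  ring

/-- Theorem 8.2: the leading-order first Lyapunov coefficient `a₂` of the Hopf
bifurcation, as a function of the derivatives `p₁ = φ'`, `p₂ = φ''`, `p₃ = φ'''` of the
regularization function at the equilibrium height, attains every real value (in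
particular negative, zero and positive values), provided
`δ(ζ⁻+χ⁻) − α(ζ⁺+χ⁺) ≠ 0`. -/
theorem lyapunov_coefficient_attains_all_values
    (δ α β ζp ζm ηp ηm χp χm : ℝ)
    (hδ : δ = -1 ∨ δ = 1) (hΩ : 0 < β * δ + α) (hαδ : α * δ < 0)
    (hne : δ * (ζm + χm) - α * (ζp + χp) ≠ 0) :
    ∀ c : ℝ, ∃ p₁ p₂ p₃ : ℝ, 0 < p₁ ∧
      ((α - δ) * p₁ ^ 2 / (16 * (β * δ + α) ^ 2))
          * ((β + 1) ^ 2 * (δ * ζm - α * ζp) - (α - δ) ^ 2 * (ηm + β * ηp))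
        + ((β + 1) * p₂ / (16 * (β * δ + α))) * (δ * χm - α * χp)
        + (1 / 8) * (p₃ / (p₁ * (α - δ)) - p₂ ^ 2 / (p₁ ^ 2 * (α - δ))
            - (β + 1) * p₂ / (β * δ + α))
          * (δ * (ζm + χm) - α * (ζp + χp)) = c :=
  lyapunov_coefficient_attains_all_values_general δ α β ζp ζm ηp ηm χp χm hαδ hne
end
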